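/- The conjugate directions PageRank algorithm, started at x^0 = 0 on g(x) = ⟨x, Qx⟩/2 - ⟨b, x⟩ with Q a symmetric positive-definite M-matrix, produces a monotonically nondecreasing sequence of iterates 0 = x^0 ≤ x^1 ≤ ... ≤ x^T, each iterate x^t being the exact minimizer of g over span{eᵢ : i ∈ S^{t-1}} ∩ ℝⁿ_{≥0}, and terminates at x^T = argmin_{x ≥ 0} g(x) after at most |supp(x*)| iterations, where T is the first iteration at which ∇g(x^T) ≥ 0. -/

import Mathlib

open Matrix

/-- The quadratic objective `g x = ⟨x, Qx⟩/2 - ⟨b, x⟩`. -/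
noncomputable def quadObj {n : ℕ} (Q : Matrix (Fin n) (Fin n) ℝ) (b x : Fin n → ℝ) : ℝ :=
  (1/2) * (x ⬝ᵥ Q.mulVec x) - b ⬝ᵥ x

lemma symm_dot {n : ℕ} {Q : Matrix (Fin n) (Fin n) ℝ} (hQ : Q.IsSymm)
    (y z : Fin n → ℝ) : y ⬝ᵥ Q.mulVec z = z ⬝ᵥ Q.mulVec y := by
  rw [dotProduct_mulVec, ← mulVec_transpose, hQ.eq, dotProduct_comm]


lemma quad_expand {n : ℕ} {Q : Matrix (Fin n) (Fin n) ℝ} (hQ : Q.IsSymm) (b y z : Fin n → ℝ) :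
    quadObj Q b z = quadObj Q b y + (Q.mulVec y - b) ⬝ᵥ (z - y)
      + (1/2) * ((z - y) ⬝ᵥ Q.mulVec (z - y)) := by
  have h := symm_dot hQ y z
  have e1 : (z - y) ⬝ᵥ Q.mulVec (z - y)
      = z ⬝ᵥ Q.mulVec z - y ⬝ᵥ Q.mulVec z - (z ⬝ᵥ Q.mulVec y - y ⬝ᵥ Q.mulVec y) := by
    rw [mulVec_sub, dotProduct_sub, sub_dotProduct, sub_dotProduct]
  have e2 : (Q.mulVec y - b) ⬝ᵥ (z - y)
      = (z ⬝ᵥ Q.mulVec y - y ⬝ᵥ Q.mulVec y) - (b ⬝ᵥ z - b ⬝ᵥ y) := by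
    rw [sub_dotProduct, dotProduct_sub, dotProduct_sub,
      dotProduct_comm (Q.mulVec y) z, dotProduct_comm (Q.mulVec y) y]
  simp only [quadObj]
  rw [e1, e2]
  linarith

lemma dot_supp {n : ℕ} {v : Fin n → ℝ} {s : Finset (Fin n)}
    (hv : ∀ i ∉ s, v i = 0) (w : Fin n → ℝ) :
    w ⬝ᵥ v = ∑ i ∈ s, w i * v i := by
  rw [dotProduct]
  exact (Finset.sum_subset (Finset.subset_univ s)
    (fun i _ hi => by rw [hv i hi, mul_zero])).symm

lemma sum_dot {n : ℕ} {ι : Type*} (s : Finset ι) (f : ι → Fin n → ℝ) (w : Fin n → ℝ) :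
    (∑ k ∈ s, f k) ⬝ᵥ w = ∑ k ∈ s, f k ⬝ᵥ w := by
  simp only [dotProduct, Finset.sum_apply, Finset.sum_mul]
  exact Finset.sum_comm

lemma dot_sum {n : ℕ} {ι : Type*} (s : Finset ι) (f : ι → Fin n → ℝ) (w : Fin n → ℝ) :
    w ⬝ᵥ (∑ k ∈ s, f k) = ∑ k ∈ s, w ⬝ᵥ f k := by
  simp only [dotProduct, Finset.sum_apply, Finset.mul_sum]
  exact Finset.sum_comm

lemma mul_nn {a b : ℝ} (ha : a ≤ 0) (hb : b ≤ 0) : 0 ≤ a * b := by nlinarith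

lemma pd_dot {n : ℕ} {Q : Matrix (Fin n) (Fin n) ℝ} (hQ : Q.PosDef)
    {v : Fin n → ℝ} (hv : v ≠ 0) : 0 < v ⬝ᵥ Q.mulVec v := by
  simpa using hQ.dotProduct_mulVec_pos hv

lemma psd_dot {n : ℕ} {Q : Matrix (Fin n) (Fin n) ℝ} (hQ : Q.PosDef)
    (v : Fin n → ℝ) : 0 ≤ v ⬝ᵥ Q.mulVec v := by
  rcases eq_or_ne v 0 with h | h
  · simp [h]
  · exact (pd_dot hQ h).le

/-- Theorem on CDPR: the conjugate directions PageRank algorithm started at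
`x⁰ = 0` produces a componentwise nondecreasing sequence of iterates, each `x^t` being the
exact minimizer of `g` over `span{eᵢ : i ∈ S^t} ∩ ℝⁿ₊` (here `S^t` is the set of the `t`
coordinates selected so far), terminates with `x^T = argmin_{x ≥ 0} g(x)` at the first
iteration `T` at which `∇g(x^T) ≥ 0`, and `T ≤ |supp(x*)|`. -/
theorem stmt_13 (n : ℕ) (Q : Matrix (Fin n) (Fin n) ℝ) (b : Fin n → ℝ)
    (hQsymm : Q.IsSymm) (hQpd : Q.PosDef)
    (hM : ∀ i j : Fin n, i ≠ j → Q i j ≤ 0)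
    (T : ℕ) (x u d : ℕ → Fin n → ℝ) (idx : ℕ → Fin n) (η : ℕ → ℝ)
    (S : ℕ → Finset (Fin n))
    (hx0 : x 0 = 0)
    (hS0 : S 0 = ∅)
    (hSsucc : ∀ t < T, S (t+1) = insert (idx t) (S t))
    (hidx : ∀ t < T, (Q.mulVec (x t) - b) (idx t) < 0)
    (hu : ∀ t < T, u t = (Q.mulVec (x t) - b) (idx t) • (Pi.single (idx t) 1 : Fin n → ℝ))
    (hd : ∀ t < T, d t = u t + ∑ k ∈ Finset.range t,
      (-(u t ⬝ᵥ Q.mulVec (d k)) / (d k ⬝ᵥ Q.mulVec (d k))) • d k)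
    (hη : ∀ t < T, η t = -((Q.mulVec (x t) - b) ⬝ᵥ d t) / (d t ⬝ᵥ Q.mulVec (d t)))
    (hx : ∀ t < T, x (t+1) = x t + η t • d t)
    (hTfirst : (∀ i, 0 ≤ (Q.mulVec (x T) - b) i) ∧
      ∀ t < T, ∃ i, (Q.mulVec (x t) - b) i < 0)
    (xstar : Fin n → ℝ)
    (hxstarmem : ∀ i, 0 ≤ xstar i)
    (hxstarmin : ∀ z : Fin n → ℝ, (∀ i, 0 ≤ z i) →
      quadObj Q b xstar ≤ quadObj Q b z) :
    (∀ t < T, ∀ i, x t i ≤ x (t+1) i) ∧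
    (∀ t ≤ T, (∀ i, 0 ≤ x t i) ∧ (∀ i ∉ S t, x t i = 0) ∧
      ∀ z : Fin n → ℝ, ((∀ i, 0 ≤ z i) ∧ ∀ i ∉ S t, z i = 0) →
        quadObj Q b (x t) ≤ quadObj Q b z) ∧
    x T = xstar ∧
    T ≤ Set.ncard {i : Fin n | xstar i ≠ 0} := by
  -- structural facts about S
  have Schar : ∀ s, s ≤ T → ∀ i, (i ∈ S s ↔ ∃ k < s, idx k = i) := by
    intro s
    induction s with
    | zero => intro _ i; simp [hS0]
    | succ s ih =>
      intro hs i
      rw [hSsucc s (by omega)]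
      simp only [Finset.mem_insert, ih (by omega)]
      constructor
      · rintro (rfl | ⟨k, hk, rfl⟩)
        · exact ⟨s, by omega, rfl⟩
        · exact ⟨k, by omega, rfl⟩
      · rintro ⟨k, hk, rfl⟩
        rcases Nat.lt_succ_iff_lt_or_eq.mp hk with h | rfl
        · exact Or.inr ⟨k, h, rfl⟩
        · exact Or.inl rfl
  have Smono : ∀ a c, a ≤ c → c ≤ T → S a ⊆ S c := by
    intro a c hac hcT i hi
    rw [Schar a (by omega) i] at hi
    rw [Schar c hcT i]
    obtain ⟨k, hk, rfl⟩ := hi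
    exact ⟨k, by omega, rfl⟩
  -- The main invariant
  have main : ∀ t, t ≤ T →
      (∀ i ∉ S t, x t i = 0) ∧
      (∀ i ∈ S t, 0 < x t i) ∧
      (∀ i ∈ S t, (Q.mulVec (x t) - b) i = 0) ∧
      (∀ k < t, (∀ i ∉ S (k+1), d k i = 0) ∧ (∀ i, d k i ≤ 0) ∧
        d k (idx k) < 0 ∧ η k < 0) ∧
      (∀ j < t, ∀ k < t, j ≠ k → d j ⬝ᵥ Q.mulVec (d k) = 0) ∧
      (∀ k < t, (Q.mulVec (x t) - b) ⬝ᵥ d k = 0) ∧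
      (S t).card = t := by
    intro t
    induction t with
    | zero =>
      intro _
      refine ⟨?_, ?_, ?_, ?_, ?_, ?_, ?_⟩ <;> simp [hx0, hS0]
    | succ t ih =>
      intro htT
      have htT' : t < T := by omega
      obtain ⟨A1, A2, A3, A4, A5, A6, A7⟩ := ih (by omega)
      set g : Fin n → ℝ := Q.mulVec (x t) - b with hg
      have gi_neg : g (idx t) < 0 := hidx t htT'
      have fresh : idx t ∉ S t := fun hmem => absurd (A3 _ hmem) (ne_of_lt gi_neg)
      have hSt1 : S (t+1) = insert (idx t) (S t) := hSsucc t htT'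
      have Ssub : ∀ k < t, S (k+1) ⊆ S t := fun k hk => Smono (k+1) t (by omega) (by omega)
      have dkdk_pos : ∀ k < t, 0 < d k ⬝ᵥ Q.mulVec (d k) := by
        intro k hk
        refine pd_dot hQpd (fun h0 => ?_)
        have := (A4 k hk).2.2.1
        rw [h0] at this
        simp at this
      have hut : u t = g (idx t) • (Pi.single (idx t) 1 : Fin n → ℝ) := hu t htT'
      have ut_apply : ∀ i, u t i = if i = idx t then g (idx t) else 0 := by
        intro i
        rw [hut]
        by_cases h : i = idx t
        · subst h; simp
        · simp [Pi.single_apply, h]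
      have hdt := hd t htT'
      have dt_apply : ∀ i, d t i = u t i + ∑ k ∈ Finset.range t,
          (-(u t ⬝ᵥ Q.mulVec (d k)) / (d k ⬝ᵥ Q.mulVec (d k))) * d k i := by
        intro i
        rw [hdt]
        simp [Finset.sum_apply]
      have dk_idx : ∀ k < t, d k (idx t) = 0 := by
        intro k hk
        exact (A4 k hk).1 (idx t) (fun h => fresh (Ssub k hk h))
      have utQdk : ∀ k < t, u t ⬝ᵥ Q.mulVec (d k) = g (idx t) * (Q.mulVec (d k)) (idx t) := by
        intro k hk
        rw [hut, smul_dotProduct, single_dotProduct, one_mul, smul_eq_mul]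
      have Qdk_nonneg : ∀ k < t, 0 ≤ (Q.mulVec (d k)) (idx t) := by
        intro k hk
        rw [mulVec, dotProduct]
        refine Finset.sum_nonneg (fun j _ => ?_)
        by_cases hji : j = idx t
        · subst hji; rw [dk_idx k hk, mul_zero]
        · exact mul_nn (hM (idx t) j (Ne.symm hji)) ((A4 k hk).2.1 j)
      have coeff_nonneg : ∀ k < t,
          0 ≤ -(u t ⬝ᵥ Q.mulVec (d k)) / (d k ⬝ᵥ Q.mulVec (d k)) := by
        intro k hk
        apply div_nonneg _ (dkdk_pos k hk).le
        rw [utQdk k hk]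
        nlinarith [Qdk_nonneg k hk]
      have dt_nonpos : ∀ i, d t i ≤ 0 := by
        intro i
        rw [dt_apply i]
        have h1 : u t i ≤ 0 := by
          rw [ut_apply i]; split <;> [exact gi_neg.le; rfl]
        have h2 : ∑ k ∈ Finset.range t,
            (-(u t ⬝ᵥ Q.mulVec (d k)) / (d k ⬝ᵥ Q.mulVec (d k))) * d k i ≤ 0 := by
          refine Finset.sum_nonpos (fun k hk => ?_)
          rw [Finset.mem_range] at hk
          exact mul_nonpos_of_nonneg_of_nonpos (coeff_nonneg k hk) ((A4 k hk).2.1 i)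
        linarith
      have dt_idx : d t (idx t) = g (idx t) := by
        rw [dt_apply,
          Finset.sum_eq_zero (fun k hk => by
            rw [Finset.mem_range] at hk; rw [dk_idx k hk, mul_zero]), add_zero, ut_apply]
        simp
      have dt_supp : ∀ i ∉ S (t+1), d t i = 0 := by
        intro i hi
        rw [hSt1, Finset.mem_insert] at hi
        push_neg at hi
        rw [dt_apply, ut_apply, if_neg hi.1]
        rw [Finset.sum_eq_zero (fun k hk => by
          rw [Finset.mem_range] at hk
          rw [(A4 k hk).1 i (fun h => hi.2 (Ssub k hk h)), mul_zero]), add_zero]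
      have conj : ∀ k < t, d t ⬝ᵥ Q.mulVec (d k) = 0 := by
        intro k hk
        rw [hdt, add_dotProduct, sum_dot]
        rw [Finset.sum_eq_single k (fun j hj hjk => by
            rw [Finset.mem_range] at hj
            rw [smul_dotProduct, A5 j hj k hk hjk, smul_eq_mul, mul_zero])
          (fun h => absurd (Finset.mem_range.mpr hk) h)]
        rw [smul_dotProduct, smul_eq_mul, div_mul_cancel₀ _ (dkdk_pos k hk).ne']
        ring
      have gdt : g ⬝ᵥ d t = g (idx t) * g (idx t) := by
        rw [hdt, dotProduct_add, dot_sum]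
        rw [Finset.sum_eq_zero (fun k hk => by
          rw [Finset.mem_range] at hk
          rw [dotProduct_smul, A6 k hk, smul_eq_mul, mul_zero]), add_zero]
        rw [hut, dotProduct_smul, dotProduct_single, mul_one, smul_eq_mul]
      have gdt_pos : 0 < g ⬝ᵥ d t := by
        rw [gdt]; nlinarith
      have dt_ne : d t ≠ (0 : Fin n → ℝ) := by
        intro h0
        have := dt_idx
        rw [h0] at this
        simp at this
        exact absurd this.symm (ne_of_lt gi_neg)
      have dtQdt_pos : 0 < d t ⬝ᵥ Q.mulVec (d t) := pd_dot hQpd dt_ne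
      have ηt_neg : η t < 0 := by
        rw [hη t htT', ← hg]
        exact div_neg_of_neg_of_pos (by linarith) dtQdt_pos
      have hxt1 : x (t+1) = x t + η t • d t := hx t htT'
      have step_nonneg : ∀ i, 0 ≤ η t * d t i := fun i =>
        mul_nn ηt_neg.le (dt_nonpos i)
      have xt_nonneg : ∀ i, 0 ≤ x t i := by
        intro i
        by_cases h : i ∈ S t
        · exact (A2 i h).le
        · rw [A1 i h]
      -- gradient recursion
      have gnext : Q.mulVec (x (t+1)) - b = g + η t • Q.mulVec (d t) := by
        rw [hxt1, mulVec_add, mulVec_smul, hg]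
        ext i
        simp
        ring
      have A6' : ∀ k < t + 1, (Q.mulVec (x (t+1)) - b) ⬝ᵥ d k = 0 := by
        intro k hk
        rw [gnext, add_dotProduct, smul_dotProduct, smul_eq_mul]
        have hcomm : Q.mulVec (d t) ⬝ᵥ d k = d t ⬝ᵥ Q.mulVec (d k) := by
          rw [dotProduct_comm, symm_dot hQsymm]
        rcases Nat.lt_succ_iff_lt_or_eq.mp hk with h | heq
        · rw [A6 k h, hcomm, conj k h, mul_zero, add_zero]
        · rw [heq] at hcomm ⊢
          rw [hcomm, hη t htT', ← hg, div_mul_cancel₀ _ dtQdt_pos.ne']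
          ring
      -- d facts bundled
      have A4' : ∀ k < t + 1, (∀ i ∉ S (k+1), d k i = 0) ∧ (∀ i, d k i ≤ 0) ∧
          d k (idx k) < 0 ∧ η k < 0 := by
        intro k hk
        rcases Nat.lt_succ_iff_lt_or_eq.mp hk with h | rfl
        · exact A4 k h
        · exact ⟨dt_supp, dt_nonpos, by rw [dt_idx]; exact gi_neg, ηt_neg⟩
      have A5' : ∀ j < t + 1, ∀ k < t + 1, j ≠ k → d j ⬝ᵥ Q.mulVec (d k) = 0 := by
        intro j hj k hk hjk
        rcases Nat.lt_succ_iff_lt_or_eq.mp hj with h1 | rfl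
        · rcases Nat.lt_succ_iff_lt_or_eq.mp hk with h2 | rfl
          · exact A5 j h1 k h2 hjk
          · rw [symm_dot hQsymm]; exact conj j h1
        · rcases Nat.lt_succ_iff_lt_or_eq.mp hk with h2 | rfl
          · exact conj k h2
          · exact absurd rfl hjk
      -- zero gradient on S (t+1)
      have key : ∀ k, k < t + 1 → (Q.mulVec (x (t+1)) - b) (idx k) = 0 := by
        intro k
        induction k using Nat.strong_induction_on with
        | _ k IH =>
          intro hk
          by_cases hmem : idx k ∈ S k
          · obtain ⟨j, hj, hji⟩ := (Schar k (by omega) (idx k)).mp hmem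
            rw [← hji]
            exact IH j hj (by omega)
          · have hkT : k < T := by omega
            have hsum := A6' k hk
            rw [dot_supp (A4' k hk).1 _] at hsum
            rw [hSsucc k hkT, Finset.sum_insert hmem] at hsum
            have hzero : ∑ i ∈ S k, (Q.mulVec (x (t+1)) - b) i * d k i = 0 := by
              refine Finset.sum_eq_zero (fun i hi => ?_)
              obtain ⟨j, hj, rfl⟩ := (Schar k (by omega) i).mp hi
              rw [IH j hj (by omega), zero_mul]
            rw [hzero, add_zero, mul_eq_zero] at hsum
            rcases hsum with h | h
            · exact h
            · exact absurd h (ne_of_lt (A4' k hk).2.2.1)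
      have A3' : ∀ i ∈ S (t+1), (Q.mulVec (x (t+1)) - b) i = 0 := by
        intro i hi
        obtain ⟨k, hk, rfl⟩ := (Schar (t+1) htT i).mp hi
        exact key k hk
      have A1' : ∀ i ∉ S (t+1), x (t+1) i = 0 := by
        intro i hi
        have hi' : i ∉ S t := fun h => hi (Smono t (t+1) (by omega) htT h)
        rw [hxt1]
        simp only [Pi.add_apply, Pi.smul_apply, smul_eq_mul]
        rw [A1 i hi', dt_supp i hi, mul_zero, add_zero]
      have A2' : ∀ i ∈ S (t+1), 0 < x (t+1) i := by
        intro i hi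
        rw [hxt1]
        simp only [Pi.add_apply, Pi.smul_apply, smul_eq_mul]
        rw [hSt1, Finset.mem_insert] at hi
        rcases hi with rfl | hi
        · rw [A1 _ fresh, zero_add, dt_idx]
          exact mul_pos_of_neg_of_neg ηt_neg gi_neg
        · have := step_nonneg i
          have := A2 i hi
          linarith
      have A7' : (S (t+1)).card = t + 1 := by
        rw [hSt1, Finset.card_insert_of_notMem fresh, A7]
      exact ⟨A1', A2', A3', A4', A5', A6', A7'⟩

  -- conclusions
  have part1 : ∀ t < T, ∀ i, x t i ≤ x (t+1) i := by
    intro t ht i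
    obtain ⟨_, _, _, A4, _, _, _⟩ := main (t+1) (by omega)
    have hd4 := A4 t (by omega)
    have hnn : 0 ≤ η t * d t i := mul_nn hd4.2.2.2.le (hd4.2.1 i)
    rw [hx t ht]
    simp only [Pi.add_apply, Pi.smul_apply, smul_eq_mul]
    linarith
  have part2 : ∀ t ≤ T, (∀ i, 0 ≤ x t i) ∧ (∀ i ∉ S t, x t i = 0) ∧
      ∀ z : Fin n → ℝ, ((∀ i, 0 ≤ z i) ∧ ∀ i ∉ S t, z i = 0) →
        quadObj Q b (x t) ≤ quadObj Q b z := by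
    intro t ht
    obtain ⟨A1, A2, A3, _, _, _, _⟩ := main t ht
    have hnn : ∀ i, 0 ≤ x t i := by
      intro i
      by_cases h : i ∈ S t
      · exact (A2 i h).le
      · rw [A1 i h]
    refine ⟨hnn, A1, ?_⟩
    rintro z ⟨hz0, hzsupp⟩
    rw [quad_expand hQsymm b (x t) z]
    have hdot : (Q.mulVec (x t) - b) ⬝ᵥ (z - x t) = 0 := by
      rw [dotProduct]
      refine Finset.sum_eq_zero (fun i _ => ?_)
      by_cases h : i ∈ S t
      · rw [A3 i h, zero_mul]
      · have : (z - x t) i = 0 := by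
          simp only [Pi.sub_apply]
          rw [hzsupp i h, A1 i h, sub_zero]
        rw [this, mul_zero]
    have hq := psd_dot hQpd (z - x t)
    rw [hdot]
    linarith
  have hxT := part2 T le_rfl
  obtain ⟨A1T, A2T, A3T, _, _, _, cardT⟩ := main T le_rfl
  have part3 : x T = xstar := by
    have hgrad := hTfirst.1
    have hdot : 0 ≤ (Q.mulVec (x T) - b) ⬝ᵥ (xstar - x T) := by
      rw [dotProduct]
      refine Finset.sum_nonneg (fun i _ => ?_)
      by_cases h : i ∈ S T
      · rw [A3T i h, zero_mul]
      · have h2 : (xstar - x T) i = xstar i := by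
          simp [A1T i h]
        rw [h2]
        exact mul_nonneg (hgrad i) (hxstarmem i)
    have hexp := quad_expand hQsymm b (x T) xstar
    have hle : quadObj Q b xstar ≤ quadObj Q b (x T) := hxstarmin (x T) hxT.1
    have hq : 0 ≤ (xstar - x T) ⬝ᵥ Q.mulVec (xstar - x T) := psd_dot hQpd _
    have hzero : xstar - x T = 0 := by
      by_contra hne
      have := pd_dot hQpd hne
      linarith
    exact (sub_eq_zero.mp hzero).symm
  refine ⟨part1, part2, part3, ?_⟩
  have hsub : (↑(S T) : Set (Fin n)) ⊆ {i : Fin n | xstar i ≠ 0} := by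
    intro i hi
    simp only [Finset.coe_sort_coe, Set.mem_setOf_eq]
    rw [← part3]
    exact (A2T i hi).ne'
  calc T = (S T).card := cardT.symm
    _ = Set.ncard (↑(S T) : Set (Fin n)) := (Set.ncard_coe_finset _).symm
    _ ≤ Set.ncard {i : Fin n | xstar i ≠ 0} := Set.ncard_le_ncard hsub (Set.toFinite _)
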